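/- Let X be a Polish metric space, a,b>0, k ≥ 2, μ₁,…,μ_k ∈ M(X) compactly supported, λ₁,…,λ_k > 0 with Σᵢ λᵢ = 1, and K := ⋃ᵢ supp(μᵢ). Then inf(B) ≥ sup(B*): for all f₁,…,f_k with fᵢ ∈ F_{λᵢ} and Σᵢ fᵢ = 0, and all μ ∈ M(X) with supp(μ) ⊆ K, one has Σᵢ λᵢ W̃₂^{a,b}(μ, μᵢ)² ≥ Σᵢ ∫_K S̄_{λᵢ}fᵢ(x) dμᵢ(x). -/

import Mathlib

open MeasureTheory Set Filter Topology
open scoped ENNReal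

set_option maxHeartbeats 1000000

noncomputable section

variable {X : Type*} [MetricSpace X] [MeasurableSpace X]

/-- Total variation `|μ - ν|` of the signed difference of two (finite) measures,
computed via the Jordan decomposition `(μ - ν)₊ = μ - ν` and `(μ - ν)₋ = ν - μ`
(`Measure.sub` is the truncated difference of measures). -/
def tvDist (μ ν : Measure X) : ℝ := ((μ - ν) univ + (ν - μ) univ).toReal

/-- Transference plans between `μ` and `ν`: Borel probability measures `π` on `X × X`
with `|μ| π(A × X) = μ A` and `|ν| π(X × B) = ν B`. -/
def plans (μ ν : Measure X) : Set (Measure (X × X)) :=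
  {π | IsProbabilityMeasure π ∧
      (∀ A : Set X, MeasurableSet A → μ univ * π (A ×ˢ univ) = μ A) ∧
      (∀ B : Set X, MeasurableSet B → ν univ * π (univ ×ˢ B) = ν B)}

/-- `W_p(μ, ν)^p = |μ| ⨅_{π ∈ Π(μ,ν)} ∫ d(x,y)^p dπ`. -/
def WpPow (p : ℝ) (μ ν : Measure X) : ℝ≥0∞ :=
  μ univ * ⨅ π ∈ plans μ ν, ∫⁻ z : X × X, edist z.1 z.2 ^ p ∂π

/-- `μ ∈ M_p(X)`: a finite Borel measure with finite `p`-th moment. -/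
def MemMp (p : ℝ) (μ : Measure X) : Prop :=
  IsFiniteMeasure μ ∧ ∃ x₀ : X, ∫⁻ x, edist x x₀ ^ p ∂μ < ⊤

/-- `W̃_p^{a,b}(μ, ν)^p`, the infimum defining the generalized Wasserstein distance. -/
def genWPow (a b p : ℝ) (μ ν : Measure X) : ℝ :=
  sInf {r : ℝ | ∃ μ' ν' : Measure X, MemMp p μ' ∧ MemMp p ν' ∧ μ' univ = ν' univ ∧
      r = a * tvDist μ μ' + a * tvDist ν ν' + b ^ p * (WpPow p μ' ν').toReal}

/-- The generalized Wasserstein distance `W̃_p^{a,b}(μ, ν)`. -/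
def genW (a b p : ℝ) (μ ν : Measure X) : ℝ := genWPow a b p μ ν ^ (1 / p)

/-- The support of a Borel measure: points all of whose open neighbourhoods have
positive measure. -/
def msupport (μ : Measure X) : Set X :=
  {x : X | ∀ U : Set X, IsOpen U → x ∈ U → 0 < μ U}

/-- `ν` is a generalized Wasserstein barycenter of `(μs i)` with weights `(l i)`:
it is a finite measure supported in `K = ⋃ᵢ supp (μs i)` minimizing
`∑ᵢ l i • W̃₂^{a,b}(μs i, ·)²` among all such measures. -/
def IsBarycenter (a b : ℝ) {k : ℕ} (μs : Fin k → Measure X) (l : Fin k → ℝ)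
    (ν : Measure X) : Prop :=
  IsFiniteMeasure ν ∧ msupport ν ⊆ ⋃ i, msupport (μs i) ∧
    ∀ ν' : Measure X, IsFiniteMeasure ν' → msupport ν' ⊆ ⋃ i, msupport (μs i) →
      ∑ i, l i * genW a b 2 (μs i) ν ^ 2 ≤ ∑ i, l i * genW a b 2 (μs i) ν' ^ 2

/-- `S_λ f (x) = inf_{y ∈ K} ( λ b² d(x,y)² - f y )`, for a function `f` on a set `K`. -/
def Sop (b lam : ℝ) {K : Set X} (f : K → ℝ) (x : K) : ℝ :=
  ⨅ y : K, (lam * b ^ 2 * dist x y ^ 2 - f y)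

/-- `S̄_λ f (x) = min { S_λ f (x), λ a }`. -/
def Sbar (a b lam : ℝ) {K : Set X} (f : K → ℝ) (x : K) : ℝ :=
  min (Sop b lam f x) (lam * a)

section AuxLemmas
set_option linter.unusedSectionVars false

section FirstAux
variable {α : Type*} [MeasurableSpace α]

lemma integrable_of_bound' {ρ : Measure α} [IsFiniteMeasure ρ] {h : α → ℝ}
    (hm : AEStronglyMeasurable h ρ) (M : ℝ) (hM : ∀ x, |h x| ≤ M) :
    Integrable h ρ :=
  (integrable_const M).mono' hm (ae_of_all _ fun x => by
    simpa [Real.norm_eq_abs] using hM x)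

lemma measure_le_sub_add (μ ν : Measure α) [IsFiniteMeasure μ] [IsFiniteMeasure ν] :
    μ ≤ (μ - ν) + ν := by
  obtain ⟨s, hs, hle, hge⟩ := hahn_decomposition (μ := μ) (ν := ν)
  have hres : ν.restrict s ≤ μ.restrict s := by
    refine Measure.le_iff.2 fun t ht => ?_
    rw [Measure.restrict_apply ht, Measure.restrict_apply ht]
    exact hle _ (ht.inter hs) inter_subset_right
  have hres' : μ.restrict sᶜ ≤ ν.restrict sᶜ := by
    refine Measure.le_iff.2 fun t ht => ?_
    rw [Measure.restrict_apply ht, Measure.restrict_apply ht]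
    exact hge _ (ht.inter hs.compl) inter_subset_right
  calc μ = μ.restrict s + μ.restrict sᶜ := (Measure.restrict_add_restrict_compl hs).symm
  _ = (μ.restrict s - ν.restrict s) + ν.restrict s + μ.restrict sᶜ := by
        rw [Measure.sub_add_cancel_of_le hres]
  _ ≤ (μ - ν) + ν.restrict s + ν.restrict sᶜ := by
        refine add_le_add (add_le_add ?_ le_rfl) hres'
        rw [← Measure.restrict_sub_eq_restrict_sub_restrict hs]
        exact Measure.restrict_le_self
  _ = (μ - ν) + ν := by
        rw [add_assoc, Measure.restrict_add_restrict_compl hs]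

lemma mass_identity (ρ σ : Measure α) [IsFiniteMeasure ρ] [IsFiniteMeasure σ] :
    (ρ - σ) univ + σ univ = ρ univ + (σ - ρ) univ := by
  obtain ⟨s, hs, hle, hge⟩ := hahn_decomposition (μ := ρ) (ν := σ)
  have hres : σ.restrict s ≤ ρ.restrict s := by
    refine Measure.le_iff.2 fun t ht => ?_
    rw [Measure.restrict_apply ht, Measure.restrict_apply ht]
    exact hle _ (ht.inter hs) inter_subset_right
  have hres' : ρ.restrict sᶜ ≤ σ.restrict sᶜ := by
    refine Measure.le_iff.2 fun t ht => ?_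
    rw [Measure.restrict_apply ht, Measure.restrict_apply ht]
    exact hge _ (ht.inter hs.compl) inter_subset_right
  have key : ∀ (μ' ν' : Measure α) (s' : Set α), MeasurableSet s' → ν'.restrict s' ≤ μ'.restrict s' →
      μ'.restrict s'ᶜ ≤ ν'.restrict s'ᶜ → IsFiniteMeasure ν' →
      (μ' - ν') univ = μ' s' - ν' s' := by
    intro μ' ν' s' hs' hr1 hr2 hfν
    haveI := hfν
    have h2 : (μ' - ν') s' = μ' s' - ν' s' := by
      have e := Measure.restrict_sub_eq_restrict_sub_restrict (μ := μ') (ν := ν') hs'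
      have e2 : (μ' - ν').restrict s' univ = (μ' - ν') s' := Measure.restrict_apply_univ _
      rw [e] at e2
      rw [← e2, Measure.sub_apply MeasurableSet.univ hr1,
        Measure.restrict_apply_univ, Measure.restrict_apply_univ]
    have h3 : (μ' - ν') s'ᶜ = 0 := by
      have e : (μ' - ν').restrict s'ᶜ = 0 := by
        rw [Measure.restrict_sub_eq_restrict_sub_restrict hs'.compl]
        exact Measure.sub_eq_zero_of_le hr2
      have e2 : (μ' - ν').restrict s'ᶜ univ = (μ' - ν') s'ᶜ := Measure.restrict_apply_univ _
      rw [e] at e2; simpa using e2.symm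
    rw [← measure_add_measure_compl (μ := μ' - ν') hs', h2, h3, add_zero]
  have e1 : (ρ - σ) univ = ρ s - σ s := key ρ σ s hs hres hres' inferInstance
  have e2 : (σ - ρ) univ = σ sᶜ - ρ sᶜ := by
    have := key σ ρ sᶜ hs.compl hres' (by simpa [compl_compl] using hres) inferInstance
    simpa using this
  have hss : σ s ≤ ρ s := hle s hs subset_rfl
  have hcc : ρ sᶜ ≤ σ sᶜ := hge sᶜ hs.compl subset_rfl
  obtain ⟨x, hx⟩ := le_iff_exists_add.1 hss
  obtain ⟨y, hy⟩ := le_iff_exists_add.1 hcc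
  rw [e1, e2, ← measure_add_measure_compl (μ := ρ) hs, ← measure_add_measure_compl (μ := σ) hs,
    hx, hy, ENNReal.add_sub_cancel_left (measure_ne_top σ s),
    ENNReal.add_sub_cancel_left (measure_ne_top ρ sᶜ)]
  ring

lemma tv_half {ρ σ : Measure α} [IsFiniteMeasure ρ] [IsFiniteMeasure σ]
    {h : α → ℝ} (hm : Measurable h) {M : ℝ} (hM : ∀ x, |h x| ≤ M) :
    ∫ x, h x ∂ρ - ∫ x, h x ∂σ ≤
      M * ((σ univ).toReal - (ρ univ).toReal) + 2 * M * ((ρ - σ) univ).toReal := by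
  haveI : IsFiniteMeasure (ρ - σ) := isFiniteMeasure_of_le ρ Measure.sub_le
  set u : α → ℝ := fun x => h x + M with hu
  have hum : Measurable u := hm.add_const M
  have hub : ∀ x, |u x| ≤ 2 * M := fun x => by
    have h1 := (abs_le.1 (hM x)).1
    have h2 := (abs_le.1 (hM x)).2
    rw [abs_le]; constructor <;> simp [hu] <;> linarith
  have hu0 : ∀ x, 0 ≤ u x := fun x => by
    have := (abs_le.1 (hM x)).1; simp [hu]; linarith
  have int1 : Integrable u ((ρ - σ) + σ) := integrable_of_bound' hum.aestronglyMeasurable _ hub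
  have h1 : ∫ x, u x ∂ρ ≤ ∫ x, u x ∂((ρ - σ) + σ) :=
    integral_mono_measure (measure_le_sub_add ρ σ) (ae_of_all _ hu0) int1
  have h2 : ∫ x, u x ∂((ρ - σ) + σ) = ∫ x, u x ∂(ρ - σ) + ∫ x, u x ∂σ :=
    integral_add_measure (integrable_of_bound' hum.aestronglyMeasurable _ hub)
      (integrable_of_bound' hum.aestronglyMeasurable _ hub)
  have h3 : ∫ x, u x ∂(ρ - σ) ≤ ((ρ - σ) univ).toReal * (2 * M) := by
    have := integral_mono (μ := ρ - σ) (integrable_of_bound' hum.aestronglyMeasurable _ hub)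
      (integrable_const (2 * M)) (fun x => (abs_le.1 (hub x)).2)
    rwa [integral_const, smul_eq_mul] at this
  have h4 : ∫ x, u x ∂ρ = ∫ x, h x ∂ρ + (ρ univ).toReal * M := by
    rw [hu, integral_add (integrable_of_bound' hm.aestronglyMeasurable _ hM) (integrable_const M),
      integral_const, smul_eq_mul, measureReal_def]
  have h5 : ∫ x, u x ∂σ = ∫ x, h x ∂σ + (σ univ).toReal * M := by
    rw [hu, integral_add (integrable_of_bound' hm.aestronglyMeasurable _ hM) (integrable_const M),
      integral_const, smul_eq_mul, measureReal_def]
  nlinarith [h1, h2, h3, h4, h5]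

end FirstAux

lemma tv_bound {ρ σ : Measure X} [IsFiniteMeasure ρ] [IsFiniteMeasure σ]
    {h : X → ℝ} (hm : Measurable h) {M : ℝ} (hM0 : 0 ≤ M) (hM : ∀ x, |h x| ≤ M) :
    ∫ x, h x ∂ρ ≤ ∫ x, h x ∂σ + M * tvDist ρ σ := by
  have h1 := tv_half (ρ := ρ) (σ := σ) hm hM
  haveI : IsFiniteMeasure (ρ - σ) := isFiniteMeasure_of_le ρ Measure.sub_le
  haveI : IsFiniteMeasure (σ - ρ) := isFiniteMeasure_of_le σ Measure.sub_le
  have htv : tvDist ρ σ = ((ρ - σ) univ).toReal + ((σ - ρ) univ).toReal :=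
    ENNReal.toReal_add (measure_ne_top _ _) (measure_ne_top _ _)
  have hmass := mass_identity ρ σ
  have hmass' : ((ρ - σ) univ).toReal + (σ univ).toReal
      = (ρ univ).toReal + ((σ - ρ) univ).toReal := by
    rw [← ENNReal.toReal_add (measure_ne_top _ _) (measure_ne_top _ _),
      ← ENNReal.toReal_add (measure_ne_top _ _) (measure_ne_top _ _), hmass]
  have heq : (σ univ).toReal - (ρ univ).toReal
      = ((σ - ρ) univ).toReal - ((ρ - σ) univ).toReal := by linarith [hmass']
  have h3 : M * ((σ univ).toReal - (ρ univ).toReal)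
      = M * (((σ - ρ) univ).toReal - ((ρ - σ) univ).toReal) := by rw [heq]
  rw [htv]; linarith [h1, h3]

lemma msupport_compl_null [SecondCountableTopology X] (μ : Measure X) :
    μ (msupport μ)ᶜ = 0 := by
  apply measure_null_of_locally_null
  intro x hx
  simp only [msupport, mem_compl_iff, mem_setOf_eq] at hx
  push_neg at hx
  obtain ⟨U, hUo, hxU, hU⟩ := hx
  exact ⟨U, nhdsWithin_le_nhds (hUo.mem_nhds hxU), le_antisymm hU zero_le⟩

lemma ennreal_two_mul_le (p q : ℝ≥0∞) : p * q + q * p ≤ p * p + q * q := by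
  have key : ∀ s r : ℝ≥0∞, s * (s + r) + (s + r) * s ≤ s * s + (s + r) * (s + r) := by
    intro s r
    refine le_iff_exists_add.2 ⟨r * r, ?_⟩
    ring
  rcases le_total p q with h | h
  · obtain ⟨r, rfl⟩ := le_iff_exists_add.1 h
    exact key p r
  · obtain ⟨r, rfl⟩ := le_iff_exists_add.1 h
    have := key q r
    calc (q + r) * q + q * (q + r) = q * (q + r) + (q + r) * q := by ring
    _ ≤ q * q + (q + r) * (q + r) := this
    _ = (q + r) * (q + r) + q * q := by ring

lemma ennreal_sq_add_le (p q : ℝ≥0∞) : (p + q) * (p + q) ≤ 2 * (p * p) + 2 * (q * q) := by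
  calc (p + q) * (p + q) = (p * p + q * q) + (p * q + q * p) := by ring
  _ ≤ (p * p + q * q) + (p * p + q * q) := add_le_add le_rfl (ennreal_two_mul_le p q)
  _ = 2 * (p * p) + 2 * (q * q) := by ring

lemma coupling_bound [BorelSpace X] [SecondCountableTopology X]
    {μ' ν' : Measure X} (h1 : MemMp 2 μ') (h2 : MemMp 2 ν')
    (hmass : μ' univ = ν' univ) {u v : X → ℝ} (hu : Measurable u) (hv : Measurable v)
    {M c : ℝ} (hc : 0 < c) (hub : ∀ x, |u x| ≤ M) (hvb : ∀ x, |v x| ≤ M)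
    (hkey : ∀ x y : X, u x + v y ≤ c * dist x y ^ 2) :
    ∫ x, u x ∂μ' + ∫ y, v y ∂ν' ≤ c * (WpPow 2 μ' ν').toReal := by
  have hpow : ∀ t : ℝ≥0∞, t ^ (2 : ℝ) = t * t := fun t => by
    rw [show (2 : ℝ) = ((2 : ℕ) : ℝ) by norm_num, ENNReal.rpow_natCast]; ring
  haveI hf1 : IsFiniteMeasure μ' := h1.1
  haveI hf2 : IsFiniteMeasure ν' := h2.1
  rcases eq_or_ne (μ' univ) 0 with hz | hm0
  · have hz' : ν' univ = 0 := hmass ▸ hz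
    have e1 : μ' = 0 := Measure.measure_univ_eq_zero.mp hz
    have e2 : ν' = 0 := Measure.measure_univ_eq_zero.mp hz'
    rw [e1, e2]
    simp [WpPow]
  · obtain ⟨-, x₀, hmom1⟩ := h1
    obtain ⟨-, x₁, hmom2⟩ := h2
    simp_rw [hpow] at hmom1 hmom2
    set m := μ' univ with hm
    have hmtop : m ≠ ⊤ := measure_ne_top μ' univ
    -- moment of ν' at x₀
    have hmom2' : ∫⁻ y, edist y x₀ * edist y x₀ ∂ν' < ⊤ := by
      have pt : ∀ y, edist y x₀ * edist y x₀ ≤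
          2 * (edist y x₁ * edist y x₁) + 2 * (edist x₁ x₀ * edist x₁ x₀) := fun y => by
        refine le_trans ?_ (ennreal_sq_add_le (edist y x₁) (edist x₁ x₀))
        exact mul_le_mul' (edist_triangle _ _ _) (edist_triangle _ _ _)
      have hmeas : Measurable fun y => edist y x₁ * edist y x₁ :=
        (measurable_id.edist measurable_const).mul (measurable_id.edist measurable_const)
      calc ∫⁻ y, edist y x₀ * edist y x₀ ∂ν'
          ≤ ∫⁻ y, (2 * (edist y x₁ * edist y x₁) + 2 * (edist x₁ x₀ * edist x₁ x₀)) ∂ν' :=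
            lintegral_mono pt
      _ = 2 * ∫⁻ y, edist y x₁ * edist y x₁ ∂ν' + 2 * (edist x₁ x₀ * edist x₁ x₀) * ν' univ := by
            rw [lintegral_add_right _ measurable_const, lintegral_const, lintegral_const_mul _ hmeas]
      _ < ⊤ := by
            refine ENNReal.add_lt_top.2 ⟨?_, ?_⟩
            · exact ENNReal.mul_lt_top (by norm_num) hmom2
            · refine ENNReal.mul_lt_top (ENNReal.mul_lt_top (by norm_num)
                (ENNReal.mul_lt_top (edist_lt_top _ _) (edist_lt_top _ _))) (measure_lt_top _ _)
    -- the product plan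
    set P := μ'.prod ν' with hP
    have hPuniv : P univ = m * m := by
      rw [hP, ← univ_prod_univ, Measure.prod_prod, ← hmass]
    set π₀ : Measure (X × X) := ((m * m)⁻¹) • P with hπ₀def
    have hmm0 : m * m ≠ 0 := mul_ne_zero hm0 hm0
    have hmmtop : m * m ≠ ⊤ := ENNReal.mul_ne_top hmtop hmtop
    have hπ₀p : IsProbabilityMeasure π₀ := ⟨by
      rw [hπ₀def, Measure.smul_apply, smul_eq_mul, hPuniv, ENNReal.inv_mul_cancel hmm0 hmmtop]⟩
    have hcancel : m * m⁻¹ = 1 := ENNReal.mul_inv_cancel hm0 hmtop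
    have hπ₀A : ∀ A : Set X, MeasurableSet A → μ' univ * π₀ (A ×ˢ univ) = μ' A := by
      intro A _
      rw [hπ₀def, Measure.smul_apply, smul_eq_mul, hP, Measure.prod_prod, ← hmass,
        ENNReal.mul_inv (Or.inl hm0) (Or.inl hmtop)]
      calc m * (m⁻¹ * m⁻¹ * (μ' A * m)) = (m * m⁻¹) * ((m * m⁻¹) * μ' A) := by ring
      _ = μ' A := by rw [hcancel, one_mul, one_mul]
    have hπ₀B : ∀ B : Set X, MeasurableSet B → ν' univ * π₀ (univ ×ˢ B) = ν' B := by
      intro B _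
      rw [hπ₀def, Measure.smul_apply, smul_eq_mul, hP, Measure.prod_prod, ← hmass,
        ENNReal.mul_inv (Or.inl hm0) (Or.inl hmtop)]
      calc m * (m⁻¹ * m⁻¹ * (m * ν' B)) = (m * m⁻¹) * ((m * m⁻¹) * ν' B) := by ring
      _ = ν' B := by rw [hcancel, one_mul, one_mul]
    have hπ₀mem : π₀ ∈ plans μ' ν' := ⟨hπ₀p, hπ₀A, hπ₀B⟩
    -- measurability of the cost
    have hem : Measurable fun z : X × X => edist z.1 z.2 * edist z.1 z.2 :=
      (measurable_fst.edist measurable_snd).mul (measurable_fst.edist measurable_snd)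
    have he1 : Measurable fun z : X × X => edist z.1 x₀ * edist z.1 x₀ :=
      (measurable_fst.edist measurable_const).mul (measurable_fst.edist measurable_const)
    have he2 : Measurable fun z : X × X => edist z.2 x₀ * edist z.2 x₀ :=
      (measurable_snd.edist measurable_const).mul (measurable_snd.edist measurable_const)
    -- product lintegrals
    have hprod1 : ∫⁻ z : X × X, edist z.1 x₀ * edist z.1 x₀ ∂P
        = (∫⁻ x, edist x x₀ * edist x x₀ ∂μ') * m := by
      have := lintegral_prod_mul (μ := μ') (ν := ν')
        (f := fun x => edist x x₀ * edist x x₀) (g := fun _ => (1 : ℝ≥0∞))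
        ((measurable_id.edist measurable_const).mul
          (measurable_id.edist measurable_const)).aemeasurable aemeasurable_const
      simpa [lintegral_one, ← hmass, hm] using this
    have hprod2 : ∫⁻ z : X × X, edist z.2 x₀ * edist z.2 x₀ ∂P
        = m * ∫⁻ y, edist y x₀ * edist y x₀ ∂ν' := by
      have := lintegral_prod_mul (μ := μ') (ν := ν')
        (f := fun _ => (1 : ℝ≥0∞)) (g := fun y => edist y x₀ * edist y x₀)
        aemeasurable_const
        ((measurable_id.edist measurable_const).mul
          (measurable_id.edist measurable_const)).aemeasurable
      simpa [lintegral_one, hm] using this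
    -- finiteness of the cost of π₀
    have hcostP : ∫⁻ z : X × X, edist z.1 z.2 * edist z.1 z.2 ∂P < ⊤ := by
      have pt : ∀ z : X × X, edist z.1 z.2 * edist z.1 z.2 ≤
          2 * (edist z.1 x₀ * edist z.1 x₀) + 2 * (edist z.2 x₀ * edist z.2 x₀) := fun z => by
        refine le_trans ?_ (ennreal_sq_add_le (edist z.1 x₀) (edist z.2 x₀))
        have htri : edist z.1 z.2 ≤ edist z.1 x₀ + edist z.2 x₀ := by
          rw [edist_comm z.2 x₀]; exact edist_triangle _ _ _
        exact mul_le_mul' htri htri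
      calc ∫⁻ z : X × X, edist z.1 z.2 * edist z.1 z.2 ∂P
          ≤ ∫⁻ z : X × X, (2 * (edist z.1 x₀ * edist z.1 x₀)
              + 2 * (edist z.2 x₀ * edist z.2 x₀)) ∂P := lintegral_mono pt
      _ = 2 * ∫⁻ z : X × X, edist z.1 x₀ * edist z.1 x₀ ∂P
            + 2 * ∫⁻ z : X × X, edist z.2 x₀ * edist z.2 x₀ ∂P := by
          rw [lintegral_add_left (he1.const_mul 2), lintegral_const_mul _ he1,
            lintegral_const_mul _ he2]
      _ < ⊤ := by
          rw [hprod1, hprod2]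
          refine ENNReal.add_lt_top.2 ⟨?_, ?_⟩
          · exact ENNReal.mul_lt_top (by norm_num)
              (ENNReal.mul_lt_top hmom1 (lt_top_iff_ne_top.2 hmtop))
          · exact ENNReal.mul_lt_top (by norm_num)
              (ENNReal.mul_lt_top (lt_top_iff_ne_top.2 hmtop) hmom2')
    have hL₀ : (∫⁻ z : X × X, edist z.1 z.2 ^ (2 : ℝ) ∂π₀) < ⊤ := by
      simp_rw [hpow]
      rw [hπ₀def, lintegral_smul_measure]
      exact ENNReal.mul_lt_top (ENNReal.inv_lt_top.2 (pos_iff_ne_zero.2 hmm0)) hcostP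
    -- the infimum is finite
    have hIle : (⨅ π ∈ plans μ' ν', ∫⁻ z : X × X, edist z.1 z.2 ^ (2 : ℝ) ∂π)
        ≤ ∫⁻ z : X × X, edist z.1 z.2 ^ (2 : ℝ) ∂π₀ := iInf₂_le π₀ hπ₀mem
    have hItop : (⨅ π ∈ plans μ' ν', ∫⁻ z : X × X, edist z.1 z.2 ^ (2 : ℝ) ∂π) ≠ ⊤ :=
      (lt_of_le_of_lt hIle hL₀).ne
    have hWdef : WpPow 2 μ' ν'
        = m * ⨅ π ∈ plans μ' ν', ∫⁻ z : X × X, edist z.1 z.2 ^ (2 : ℝ) ∂π := rfl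
    have hWtop : WpPow 2 μ' ν' ≠ ⊤ := by
      rw [hWdef]; exact ENNReal.mul_ne_top hmtop hItop
    -- choose a near-optimal plan
    refine le_of_forall_pos_le_add fun ε hε => ?_
    set δ := ENNReal.ofReal (ε / c) with hδdef
    have hδ0 : δ ≠ 0 := by
      simp only [hδdef, ne_eq, ENNReal.ofReal_eq_zero, not_le]
      exact div_pos hε hc
    have hδtop : δ ≠ ⊤ := ENNReal.ofReal_ne_top
    have hδm0 : δ / m ≠ 0 := by
      rw [ENNReal.div_eq_inv_mul]
      exact mul_ne_zero (ENNReal.inv_ne_zero.2 hmtop) hδ0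
    have hlt : (⨅ π ∈ plans μ' ν', ∫⁻ z : X × X, edist z.1 z.2 ^ (2 : ℝ) ∂π)
        < (⨅ π ∈ plans μ' ν', ∫⁻ z : X × X, edist z.1 z.2 ^ (2 : ℝ) ∂π) + δ / m :=
      ENNReal.lt_add_right hItop hδm0
    obtain ⟨π, hπlt⟩ := iInf_lt_iff.mp hlt
    obtain ⟨hπmem, hLπ⟩ := iInf_lt_iff.mp hπlt
    have hsumtop : (⨅ π ∈ plans μ' ν', ∫⁻ z : X × X, edist z.1 z.2 ^ (2 : ℝ) ∂π) + δ / m < ⊤ :=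
      ENNReal.add_lt_top.2 ⟨lt_top_iff_ne_top.2 hItop, ENNReal.div_lt_top hδtop hm0⟩
    have hLπtop : (∫⁻ z : X × X, edist z.1 z.2 ^ (2 : ℝ) ∂π) ≠ ⊤ := (hLπ.trans hsumtop).ne
    have hLrw : (∫⁻ z : X × X, edist z.1 z.2 ^ (2 : ℝ) ∂π)
        = ∫⁻ z : X × X, edist z.1 z.2 * edist z.1 z.2 ∂π := by simp_rw [hpow]
    haveI hπprob : IsProbabilityMeasure π := hπmem.1
    set PP := m • π with hPPdef
    haveI : IsFiniteMeasure PP := ⟨by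
      rw [hPPdef, Measure.smul_apply, smul_eq_mul, measure_univ, mul_one]
      exact lt_top_iff_ne_top.2 hmtop⟩
    have hmap1 : PP.map Prod.fst = μ' := by
      refine Measure.ext fun A hA => ?_
      rw [Measure.map_apply measurable_fst hA, hPPdef, Measure.smul_apply, smul_eq_mul]
      have hpre : (Prod.fst ⁻¹' A : Set (X × X)) = A ×ˢ univ := by ext z; simp
      rw [hpre, hm]
      exact hπmem.2.1 A hA
    have hmap2 : PP.map Prod.snd = ν' := by
      refine Measure.ext fun B hB => ?_
      rw [Measure.map_apply measurable_snd hB, hPPdef, Measure.smul_apply, smul_eq_mul]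
      have hpre : (Prod.snd ⁻¹' B : Set (X × X)) = univ ×ˢ B := by ext z; simp
      rw [hpre, hmass]
      exact hπmem.2.2 B hB
    have hiu : ∫ x, u x ∂μ' = ∫ z : X × X, u z.1 ∂PP := by
      rw [← hmap1, integral_map measurable_fst.aemeasurable hu.aestronglyMeasurable]
    have hiv : ∫ y, v y ∂ν' = ∫ z : X × X, v z.2 ∂PP := by
      rw [← hmap2, integral_map measurable_snd.aemeasurable hv.aestronglyMeasurable]
    have int_u : Integrable (fun z : X × X => u z.1) PP :=
      integrable_of_bound' (hu.comp measurable_fst).aestronglyMeasurable M fun z => hub z.1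
    have int_v : Integrable (fun z : X × X => v z.2) PP :=
      integrable_of_bound' (hv.comp measurable_snd).aestronglyMeasurable M fun z => hvb z.2
    have hcm : Measurable fun z : X × X => c * dist z.1 z.2 ^ 2 :=
      measurable_const.mul ((measurable_fst.dist measurable_snd).pow_const 2)
    have hofReal : ∀ z : X × X, ENNReal.ofReal (c * dist z.1 z.2 ^ 2)
        = ENNReal.ofReal c * (edist z.1 z.2 * edist z.1 z.2) := by
      intro z
      rw [pow_two, ENNReal.ofReal_mul hc.le, ENNReal.ofReal_mul dist_nonneg, ← edist_dist]
    have hlint : ∫⁻ z : X × X, ENNReal.ofReal (c * dist z.1 z.2 ^ 2) ∂PP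
        = ENNReal.ofReal c * (m * ∫⁻ z : X × X, edist z.1 z.2 * edist z.1 z.2 ∂π) := by
      simp_rw [hofReal]
      rw [lintegral_const_mul _ hem, hPPdef, lintegral_smul_measure, smul_eq_mul]
    have hint_cost : Integrable (fun z : X × X => c * dist z.1 z.2 ^ 2) PP := by
      refine ⟨hcm.aestronglyMeasurable, ?_⟩
      rw [hasFiniteIntegral_iff_ofReal (ae_of_all _ fun z => by positivity), hlint]
      refine ENNReal.mul_lt_top ENNReal.ofReal_lt_top
        (ENNReal.mul_lt_top (lt_top_iff_ne_top.2 hmtop) ?_)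
      rw [← hLrw]
      exact lt_top_iff_ne_top.2 hLπtop
    calc ∫ x, u x ∂μ' + ∫ y, v y ∂ν'
        = ∫ z : X × X, (u z.1 + v z.2) ∂PP := by rw [hiu, hiv, ← integral_add int_u int_v]
    _ ≤ ∫ z : X × X, c * dist z.1 z.2 ^ 2 ∂PP :=
        integral_mono (int_u.add int_v) hint_cost fun z => hkey z.1 z.2
    _ = (ENNReal.ofReal c * (m * ∫⁻ z : X × X, edist z.1 z.2 * edist z.1 z.2 ∂π)).toReal := by
        rw [integral_eq_lintegral_of_nonneg_ae (ae_of_all _ fun z => by positivity)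
          hcm.aestronglyMeasurable, hlint]
    _ = c * (m * ∫⁻ z : X × X, edist z.1 z.2 * edist z.1 z.2 ∂π).toReal := by
        rw [ENNReal.toReal_mul, ENNReal.toReal_ofReal hc.le]
    _ ≤ c * ((WpPow 2 μ' ν').toReal + ε / c) := by
        refine mul_le_mul_of_nonneg_left ?_ hc.le
        have hmain : m * (∫⁻ z : X × X, edist z.1 z.2 * edist z.1 z.2 ∂π)
            ≤ WpPow 2 μ' ν' + δ := by
          rw [← hLrw]
          calc m * (∫⁻ z : X × X, edist z.1 z.2 ^ (2 : ℝ) ∂π)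
              ≤ m * ((⨅ π ∈ plans μ' ν', ∫⁻ z : X × X, edist z.1 z.2 ^ (2 : ℝ) ∂π) + δ / m) :=
                mul_le_mul_right hLπ.le m
          _ = m * (⨅ π ∈ plans μ' ν', ∫⁻ z : X × X, edist z.1 z.2 ^ (2 : ℝ) ∂π)
                + m * (δ / m) := mul_add _ _ _
          _ ≤ WpPow 2 μ' ν' + δ := by
              rw [hWdef]
              exact add_le_add le_rfl ENNReal.mul_div_le
        have hfin : WpPow 2 μ' ν' + δ ≠ ⊤ := ENNReal.add_ne_top.2 ⟨hWtop, hδtop⟩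
        have := ENNReal.toReal_mono hfin hmain
        rwa [ENNReal.toReal_add hWtop hδtop, hδdef,
          ENNReal.toReal_ofReal (le_of_lt (div_pos hε hc))] at this
    _ = c * (WpPow 2 μ' ν').toReal + ε := by
        rw [mul_add, mul_div_cancel₀ _ hc.ne']

lemma bddBelow_G {K : Set X} (hKc : IsCompact K) {c : ℝ} (hc : 0 ≤ c)
    (f : C(K, ℝ)) (x : X) :
    BddBelow (range fun y : K => c * dist x (y : X) ^ 2 - f y) := by
  haveI : CompactSpace K := isCompact_iff_compactSpace.mp hKc
  refine ⟨-‖f‖, ?_⟩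
  rintro r ⟨y, rfl⟩
  have h1 : |f y| ≤ ‖f‖ := by
    have := f.norm_coe_le_norm y; rwa [Real.norm_eq_abs] at this
  have h2 : (0 : ℝ) ≤ c * dist x (y : X) ^ 2 := by positivity
  have := (abs_le.1 h1).2
  dsimp; linarith

lemma G_cont {K : Set X} (hKc : IsCompact K) [Nonempty K] {c : ℝ} (hc : 0 ≤ c)
    (f : C(K, ℝ)) :
    Continuous (fun x : X => ⨅ y : K, (c * dist x (y : X) ^ 2 - f y)) := by
  haveI : CompactSpace K := isCompact_iff_compactSpace.mp hKc
  set G : X → ℝ := fun x => ⨅ y : K, (c * dist x (y : X) ^ 2 - f y) with hG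
  have hGle : ∀ (x x' : X) (R : ℝ), 0 ≤ R → (∀ y : K, dist x (y : X) ≤ R) →
      (∀ y : K, dist x' (y : X) ≤ R) → G x ≤ G x' + c * (2 * R) * dist x x' := by
    intro x x' R hR0 hR hR'
    have hstep : ∀ y : K, G x - c * (2 * R) * dist x x' ≤ c * dist x' (y : X) ^ 2 - f y := by
      intro y
      have h1 : G x ≤ c * dist x (y : X) ^ 2 - f y := ciInf_le (bddBelow_G hKc hc f x) y
      have habs : |dist x (y : X) - dist x' (y : X)| ≤ dist x x' := abs_dist_sub_le x x' (y : X)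
      have h3 : dist x (y : X) - dist x' (y : X) ≤ dist x x' := (abs_le.1 habs).2
      have hpq : dist x (y : X) + dist x' (y : X) ≤ 2 * R := by
        have := hR y; have := hR' y; linarith
      have hsum0 : (0 : ℝ) ≤ dist x (y : X) + dist x' (y : X) := by
        have := dist_nonneg (x := x) (y := (y : X))
        have := dist_nonneg (x := x') (y := (y : X)); linarith
      have h4 : dist x (y : X) ^ 2 - dist x' (y : X) ^ 2 ≤ 2 * R * dist x x' := by
        have e1 : dist x (y : X) ^ 2 - dist x' (y : X) ^ 2
            = (dist x (y : X) - dist x' (y : X)) * (dist x (y : X) + dist x' (y : X)) := by ring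
        have e2 : (dist x (y : X) - dist x' (y : X)) * (dist x (y : X) + dist x' (y : X))
            ≤ dist x x' * (dist x (y : X) + dist x' (y : X)) :=
          mul_le_mul_of_nonneg_right h3 hsum0
        have e3 : dist x x' * (dist x (y : X) + dist x' (y : X)) ≤ dist x x' * (2 * R) :=
          mul_le_mul_of_nonneg_left hpq dist_nonneg
        calc dist x (y : X) ^ 2 - dist x' (y : X) ^ 2
            = (dist x (y : X) - dist x' (y : X)) * (dist x (y : X) + dist x' (y : X)) := e1
        _ ≤ dist x x' * (2 * R) := le_trans e2 e3
        _ = 2 * R * dist x x' := by ring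
      have h5 : c * (dist x (y : X) ^ 2 - dist x' (y : X) ^ 2) ≤ c * (2 * R * dist x x') :=
        mul_le_mul_of_nonneg_left h4 hc
      have h6 : c * dist x (y : X) ^ 2 ≤ c * dist x' (y : X) ^ 2 + c * (2 * R) * dist x x' := by
        nlinarith [h5]
      linarith
    have := le_ciInf hstep
    linarith [this]
  rw [continuous_iff_continuousAt]
  intro x₀
  obtain ⟨r, hr⟩ := hKc.isBounded.subset_closedBall x₀
  set R : ℝ := max r 0 + 1 with hRdef
  have hR0 : (0 : ℝ) ≤ R := by
    have := le_max_right r 0; simp [hRdef]; linarith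
  have hRy : ∀ y : K, dist x₀ (y : X) ≤ R := by
    intro y
    have hy := hr y.2
    rw [Metric.mem_closedBall] at hy
    rw [dist_comm]
    have := le_max_left r 0
    simp only [hRdef]; linarith
  set L : ℝ := c * (2 * (R + 1)) with hLdef
  have hL0 : 0 ≤ L := by positivity
  rw [Metric.continuousAt_iff]
  intro ε hε
  refine ⟨min 1 (ε / (L + 1)), lt_min one_pos (div_pos hε (by linarith)), ?_⟩
  intro x hx
  have hx1 : dist x x₀ ≤ 1 := le_of_lt (lt_of_lt_of_le hx (min_le_left _ _))
  have hx2 : dist x x₀ < ε / (L + 1) := lt_of_lt_of_le hx (min_le_right _ _)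
  have hbound1 : ∀ y : K, dist x (y : X) ≤ R + 1 := by
    intro y
    calc dist x (y : X) ≤ dist x x₀ + dist x₀ (y : X) := dist_triangle _ _ _
    _ ≤ 1 + R := add_le_add hx1 (hRy y)
    _ = R + 1 := by ring
  have hbound2 : ∀ y : K, dist x₀ (y : X) ≤ R + 1 := fun y => le_trans (hRy y) (by linarith)
  have hd1 : G x ≤ G x₀ + L * dist x x₀ := hGle x x₀ (R + 1) (by linarith) hbound1 hbound2
  have hd2 : G x₀ ≤ G x + L * dist x x₀ := by
    have := hGle x₀ x (R + 1) (by linarith) hbound2 hbound1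
    rwa [dist_comm x₀ x] at this
  rw [Real.dist_eq, abs_lt]
  have hLd : L * dist x x₀ < ε := by
    have h7 : L * dist x x₀ ≤ (L + 1) * dist x x₀ := by nlinarith [dist_nonneg (x := x) (y := x₀)]
    have h8 : (L + 1) * dist x x₀ < (L + 1) * (ε / (L + 1)) :=
      mul_lt_mul_of_pos_left hx2 (by linarith)
    have h9 : (L + 1) * (ε / (L + 1)) = ε := by field_simp
    linarith
  constructor <;> linarith

lemma core_ineq [BorelSpace X] [SecondCountableTopology X]
    {K : Set X} (hKc : IsCompact K) (hKm : MeasurableSet K) (hKne : K.Nonempty)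
    {lam a b : ℝ} (ha : 0 < a) (hb : 0 < b) (hlam : 0 < lam)
    (f : C(K, ℝ)) (hf : ∀ y : K, f y ≤ lam * a)
    (ρ μ : Measure X) [IsFiniteMeasure ρ] [IsFiniteMeasure μ]
    (hρK : ρ Kᶜ = 0) (hμK : μ Kᶜ = 0)
    {μ' ν' : Measure X} (h1 : MemMp 2 μ') (h2 : MemMp 2 ν') (hm : μ' univ = ν' univ) :
    (∫ y, Sbar a b lam (⇑f) y ∂(ρ.comap Subtype.val)) + ∫ y, f y ∂(μ.comap Subtype.val)
      ≤ lam * (a * tvDist μ μ' + a * tvDist ρ ν'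
          + b ^ (2 : ℝ) * (WpPow 2 μ' ν').toReal) := by
  haveI : Nonempty K := hKne.to_subtype
  haveI : CompactSpace K := isCompact_iff_compactSpace.mp hKc
  haveI := h1.1
  haveI := h2.1
  set c : ℝ := lam * b ^ 2 with hcdef
  have hc0 : 0 < c := by positivity
  have hla0 : 0 ≤ lam * a := by positivity
  set G : X → ℝ := fun x => ⨅ y : K, (c * dist x (y : X) ^ 2 - f y) with hGdef
  have hGc : Continuous G := G_cont hKc hc0.le f
  have hGle : ∀ (x : X) (y : K), G x ≤ c * dist x (y : X) ^ 2 - f y := fun x y =>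
    ciInf_le (bddBelow_G hKc hc0.le f x) y
  have hGlb : ∀ x : X, -‖f‖ ≤ G x := by
    intro x
    refine le_ciInf fun y => ?_
    have h1' : |f y| ≤ ‖f‖ := by
      have := f.norm_coe_le_norm y; rwa [Real.norm_eq_abs] at this
    have h2' : (0 : ℝ) ≤ c * dist x (y : X) ^ 2 := by positivity
    have := (abs_le.1 h1').2
    linarith
  set g : X → ℝ := fun x => max (min (G x) (lam * a)) (-(lam * a)) with hgdef
  have hgm : Measurable g := (hGc.measurable.min measurable_const).max measurable_const
  have hgb : ∀ x, |g x| ≤ lam * a := by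
    intro x
    refine abs_le.2 ⟨le_max_right _ _, max_le (min_le_right _ _) (by linarith)⟩
  set fh : X → ℝ := Function.extend (Subtype.val : K → X)
    (fun y => max (f y) (-(lam * a))) (fun _ => -(lam * a)) with hfhdef
  have hinj : Function.Injective (Subtype.val : K → X) := Subtype.val_injective
  have hfhK : ∀ y : K, fh (y : X) = max (f y) (-(lam * a)) := fun y =>
    hinj.extend_apply _ _ y
  have hfhK' : ∀ x : X, x ∉ K → fh x = -(lam * a) := fun x hx =>
    Function.extend_apply' _ _ _ (fun ⟨y, hy⟩ => hx (hy ▸ y.2))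
  have hfhm : Measurable fh :=
    (MeasurableEmbedding.subtype_coe hKm).measurable_extend
      ((f.continuous.max continuous_const).measurable) measurable_const
  have hfhb : ∀ x, |fh x| ≤ lam * a := by
    intro x
    by_cases hx : x ∈ K
    · rw [show x = ((⟨x, hx⟩ : K) : X) from rfl, hfhK ⟨x, hx⟩]
      exact abs_le.2 ⟨le_max_right _ _, max_le (hf ⟨x, hx⟩) (by linarith)⟩
    · rw [hfhK' x hx, abs_neg, abs_of_nonneg hla0]
  have hkey : ∀ x y : X, g x + fh y ≤ c * dist x y ^ 2 := by
    intro x y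
    have hcd : (0 : ℝ) ≤ c * dist x y ^ 2 := by positivity
    by_cases hy : y ∈ K
    · rw [show y = ((⟨y, hy⟩ : K) : X) from rfl, hfhK ⟨y, hy⟩]
      rcases le_total (f ⟨y, hy⟩) (-(lam * a)) with h | h
      · rw [max_eq_right h]
        have := (abs_le.1 (hgb x)).2
        linarith
      · rw [max_eq_left h]
        have hg2 : g x ≤ max (G x) (-(lam * a)) := max_le_max (min_le_left _ _) le_rfl
        have case1 : G x + f ⟨y, hy⟩ ≤ c * dist x y ^ 2 := by
          have := hGle x ⟨y, hy⟩
          linarith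
        have case2 : (-(lam * a)) + f ⟨y, hy⟩ ≤ c * dist x y ^ 2 := by
          have := hf ⟨y, hy⟩
          linarith
        have hmax : max (G x) (-(lam * a)) + f ⟨y, hy⟩ ≤ c * dist x y ^ 2 := by
          rcases max_choice (G x) (-(lam * a)) with h' | h' <;> rw [h']
          exacts [case1, case2]
        linarith
    · rw [hfhK' y hy]
      have := (abs_le.1 (hgb x)).2
      linarith
  -- comap measures
  have hre : MeasurableEmbedding (Subtype.val : K → X) := MeasurableEmbedding.subtype_coe hKm
  haveI : IsFiniteMeasure (ρ.comap Subtype.val) := by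
    constructor
    rw [hre.comap_apply]
    exact measure_lt_top _ _
  haveI : IsFiniteMeasure (μ.comap Subtype.val) := by
    constructor
    rw [hre.comap_apply]
    exact measure_lt_top _ _
  have hrestρ : ρ.restrict K = ρ := Measure.restrict_eq_self_of_ae_mem (ae_iff.2 hρK)
  have hrestμ : μ.restrict K = μ := Measure.restrict_eq_self_of_ae_mem (ae_iff.2 hμK)
  have hnorm0 : (0 : ℝ) ≤ ‖f‖ := norm_nonneg f
  -- Step 1
  have step1 : ∫ y, Sbar a b lam (⇑f) y ∂(ρ.comap Subtype.val) ≤ ∫ x, g x ∂ρ := by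
    have hSbar_eq : ∀ y : K, Sbar a b lam (⇑f) y = min (G (y : X)) (lam * a) := by
      intro y
      have : Sop b lam (⇑f) y = G (y : X) := by
        simp only [Sop, hGdef]
        refine congrArg _ (funext fun y' => ?_)
        rw [Subtype.dist_eq]
      rw [Sbar, this]
    have e1 : ∫ y, Sbar a b lam (⇑f) y ∂(ρ.comap Subtype.val)
        = ∫ y : K, min (G (y : X)) (lam * a) ∂(ρ.comap Subtype.val) :=
      integral_congr_ae (ae_of_all _ hSbar_eq)
    have hminb : ∀ x : X, |min (G x) (lam * a)| ≤ ‖f‖ + lam * a := by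
      intro x
      refine abs_le.2 ⟨?_, le_trans (min_le_right _ _) (by linarith)⟩
      have := hGlb x
      rcases min_choice (G x) (lam * a) with h' | h' <;> rw [h'] <;> linarith
    have e2 : ∫ y : K, min (G (y : X)) (lam * a) ∂(ρ.comap Subtype.val)
        = ∫ x, min (G x) (lam * a) ∂(ρ.restrict K) := by
      rw [← map_comap_subtype_coe hKm, hre.integral_map]
    have e3 : ∫ x, min (G x) (lam * a) ∂(ρ.restrict K) ≤ ∫ x, g x ∂(ρ.restrict K) := by
      refine integral_mono ?_ ?_ fun x => le_max_left _ _
      · exact integrable_of_bound' (hGc.measurable.min measurable_const).aestronglyMeasurable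
          (‖f‖ + lam * a) hminb
      · exact integrable_of_bound' hgm.aestronglyMeasurable (lam * a) hgb
    calc ∫ y, Sbar a b lam (⇑f) y ∂(ρ.comap Subtype.val)
        = ∫ x, min (G x) (lam * a) ∂(ρ.restrict K) := by rw [e1, e2]
    _ ≤ ∫ x, g x ∂(ρ.restrict K) := e3
    _ = ∫ x, g x ∂ρ := by rw [hrestρ]
  -- Step 2
  have step2 : ∫ y, f y ∂(μ.comap Subtype.val) ≤ ∫ x, fh x ∂μ := by
    have e0 : ∫ y, f y ∂(μ.comap Subtype.val)
        ≤ ∫ y : K, fh (y : X) ∂(μ.comap Subtype.val) := by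
      refine integral_mono ?_ ?_ fun y => ?_
      · refine integrable_of_bound' f.continuous.measurable.aestronglyMeasurable ‖f‖ fun y => ?_
        have := f.norm_coe_le_norm y; rwa [Real.norm_eq_abs] at this
      · exact integrable_of_bound' (hfhm.comp measurable_subtype_coe).aestronglyMeasurable
          (lam * a) fun y => hfhb _
      · rw [hfhK y]
        exact le_max_left _ _
    have e2 : ∫ y : K, fh (y : X) ∂(μ.comap Subtype.val) = ∫ x, fh x ∂(μ.restrict K) := by
      rw [← map_comap_subtype_coe hKm, hre.integral_map]
    calc ∫ y, f y ∂(μ.comap Subtype.val)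
        ≤ ∫ y : K, fh (y : X) ∂(μ.comap Subtype.val) := e0
    _ = ∫ x, fh x ∂(μ.restrict K) := e2
    _ = ∫ x, fh x ∂μ := by rw [hrestμ]
  -- Step 3, 4, 5
  have step3 : ∫ x, g x ∂ρ ≤ ∫ x, g x ∂ν' + (lam * a) * tvDist ρ ν' :=
    tv_bound hgm hla0 hgb
  have step4 : ∫ x, fh x ∂μ ≤ ∫ x, fh x ∂μ' + (lam * a) * tvDist μ μ' :=
    tv_bound hfhm hla0 hfhb
  have step5 : ∫ x, fh x ∂μ' + ∫ y, g y ∂ν' ≤ c * (WpPow 2 μ' ν').toReal := by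
    refine coupling_bound h1 h2 hm hfhm hgm hc0 hfhb hgb fun x y => ?_
    have := hkey y x
    rw [dist_comm x y]
    linarith
  have hb2 : b ^ (2 : ℝ) = b ^ 2 := by
    rw [show (2 : ℝ) = ((2 : ℕ) : ℝ) by norm_num, Real.rpow_natCast]
  calc (∫ y, Sbar a b lam (⇑f) y ∂(ρ.comap Subtype.val)) + ∫ y, f y ∂(μ.comap Subtype.val)
      ≤ ∫ x, g x ∂ρ + ∫ x, fh x ∂μ := add_le_add step1 step2
  _ ≤ (∫ x, g x ∂ν' + (lam * a) * tvDist ρ ν') + (∫ x, fh x ∂μ' + (lam * a) * tvDist μ μ') :=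
      add_le_add step3 step4
  _ ≤ (lam * a) * tvDist ρ ν' + (lam * a) * tvDist μ μ' + c * (WpPow 2 μ' ν').toReal := by
      linarith [step5]
  _ = lam * (a * tvDist μ μ' + a * tvDist ρ ν' + b ^ (2 : ℝ) * (WpPow 2 μ' ν').toReal) := by
      rw [hb2, hcdef]; ring

end AuxLemmas

/-- weak duality `inf (B) ≥ sup (B*)` for the barycenter problem. -/
theorem barycenter_weak_duality
    {X : Type*} [MetricSpace X] [PolishSpace X] [MeasurableSpace X] [BorelSpace X]
    (a b : ℝ) (ha : 0 < a) (hb : 0 < b)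
    (k : ℕ) (hk : 2 ≤ k)
    (μs : Fin k → Measure X) (hfin : ∀ i, IsFiniteMeasure (μs i))
    (hcpt : ∀ i, IsCompact (msupport (μs i)))
    (l : Fin k → ℝ) (hl : ∀ i, 0 < l i) (hsum : ∑ i, l i = 1)
    (K : Set X) (hK : K = ⋃ i, msupport (μs i))
    (f : Fin k → C(K, ℝ))
    (hf : ∀ i, ∀ y : K, f i y ≤ l i * a) (hf0 : ∑ i, f i = 0)
    (μ : Measure X) [IsFiniteMeasure μ] (hμ : msupport μ ⊆ K) :
    ∑ i, ∫ y, Sbar a b (l i) (⇑(f i)) y ∂((μs i).comap Subtype.val) ≤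
      ∑ i, l i * genW a b 2 μ (μs i) ^ 2 := by
  have hKcpt : IsCompact K := by rw [hK]; exact isCompact_iUnion hcpt
  have hKm : MeasurableSet K := hKcpt.isClosed.measurableSet
  have hsupK : ∀ i, μs i Kᶜ = 0 := by
    intro i
    have hsub : msupport (μs i) ⊆ K := by
      rw [hK]; exact subset_iUnion (fun j => msupport (μs j)) i
    exact measure_mono_null (compl_subset_compl.2 hsub) (msupport_compl_null (μs i))
  have hμKc : μ Kᶜ = 0 :=
    measure_mono_null (compl_subset_compl.2 hμ) (msupport_compl_null μ)
  have hWnonneg : ∀ i, 0 ≤ genWPow a b 2 μ (μs i) := by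
    intro i
    refine Real.sInf_nonneg fun r hr => ?_
    obtain ⟨μ', ν', h1, h2, hmm, rfl⟩ := hr
    have t1 : (0 : ℝ) ≤ tvDist μ μ' := ENNReal.toReal_nonneg
    have t2 : (0 : ℝ) ≤ tvDist (μs i) ν' := ENNReal.toReal_nonneg
    have t3 : (0 : ℝ) ≤ b ^ (2 : ℝ) := Real.rpow_nonneg hb.le 2
    have t4 : (0 : ℝ) ≤ (WpPow 2 μ' ν').toReal := ENNReal.toReal_nonneg
    have := mul_nonneg ha.le t1
    have := mul_nonneg ha.le t2
    have := mul_nonneg t3 t4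
    linarith
  have hsq : ∀ i, genW a b 2 μ (μs i) ^ 2 = genWPow a b 2 μ (μs i) := by
    intro i
    rw [genW, ← Real.rpow_natCast (genWPow a b 2 μ (μs i) ^ (1 / (2 : ℝ))) 2,
      ← Real.rpow_mul (hWnonneg i)]
    norm_num
  rcases K.eq_empty_or_nonempty with hKe | hKne
  · have hz : ∀ i, μs i = 0 := by
      intro i
      refine Measure.measure_univ_eq_zero.mp ?_
      have := hsupK i
      rwa [hKe, compl_empty] at this
    have hLHS : ∑ i, ∫ y, Sbar a b (l i) (⇑(f i)) y ∂((μs i).comap Subtype.val) = 0 := by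
      refine Finset.sum_eq_zero fun i _ => ?_
      rw [hz i, Measure.comap_zero, integral_zero_measure]
    rw [hLHS]
    refine Finset.sum_nonneg fun i _ => mul_nonneg (hl i).le (sq_nonneg _)
  · -- nonempty case
    obtain ⟨x₀, hx₀⟩ := hKne
    haveI : Nonempty X := ⟨x₀⟩
    have hKne' : K.Nonempty := ⟨x₀, hx₀⟩
    haveI : CompactSpace K := isCompact_iff_compactSpace.mp hKcpt
    haveI : IsFiniteMeasure (μ.comap Subtype.val) := by
      constructor
      rw [(MeasurableEmbedding.subtype_coe hKm).comap_apply]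
      exact measure_lt_top _ _
    have key : ∀ i, (∫ y, Sbar a b (l i) (⇑(f i)) y ∂((μs i).comap Subtype.val))
        + (∫ y, (f i) y ∂(μ.comap Subtype.val)) ≤ l i * genWPow a b 2 μ (μs i) := by
      intro i
      haveI := hfin i
      rw [genWPow]
      have hSne : Set.Nonempty {r : ℝ | ∃ μ' ν' : Measure X, MemMp 2 μ' ∧ MemMp 2 ν' ∧
          μ' univ = ν' univ ∧ r = a * tvDist μ μ' + a * tvDist (μs i) ν'
            + b ^ (2 : ℝ) * (WpPow 2 μ' ν').toReal} := by
        refine ⟨_, 0, 0, ⟨inferInstance, x₀, by simp⟩, ⟨inferInstance, x₀, by simp⟩, rfl, rfl⟩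
      have hlow : ∀ r ∈ {r : ℝ | ∃ μ' ν' : Measure X, MemMp 2 μ' ∧ MemMp 2 ν' ∧
          μ' univ = ν' univ ∧ r = a * tvDist μ μ' + a * tvDist (μs i) ν'
            + b ^ (2 : ℝ) * (WpPow 2 μ' ν').toReal},
          (∫ y, Sbar a b (l i) (⇑(f i)) y ∂((μs i).comap Subtype.val))
            + (∫ y, (f i) y ∂(μ.comap Subtype.val)) ≤ l i * r := by
        rintro r ⟨μ', ν', h1', h2', hmm', rfl⟩
        exact core_ineq hKcpt hKm hKne' ha hb (hl i) (f i) (hf i) (μs i) μ (hsupK i) hμKc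
          h1' h2' hmm'
      have hdiv : ((∫ y, Sbar a b (l i) (⇑(f i)) y ∂((μs i).comap Subtype.val))
          + (∫ y, (f i) y ∂(μ.comap Subtype.val))) / l i
          ≤ sInf {r : ℝ | ∃ μ' ν' : Measure X, MemMp 2 μ' ∧ MemMp 2 ν' ∧
            μ' univ = ν' univ ∧ r = a * tvDist μ μ' + a * tvDist (μs i) ν'
              + b ^ (2 : ℝ) * (WpPow 2 μ' ν').toReal} := by
        refine le_csInf hSne fun r hr => ?_
        rw [div_le_iff₀ (hl i)]
        calc _ ≤ l i * r := hlow r hr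
        _ = r * l i := mul_comm _ _
      exact (div_le_iff₀' (hl i)).1 hdiv
    have hsum0 : ∑ i, ∫ y, (f i) y ∂(μ.comap Subtype.val) = 0 := by
      have hint : ∀ i ∈ Finset.univ, Integrable (fun y : K => (f i) y) (μ.comap Subtype.val) := by
        intro i _
        refine integrable_of_bound' (f i).continuous.measurable.aestronglyMeasurable
          ‖f i‖ fun y => ?_
        have := (f i).norm_coe_le_norm y
        rwa [Real.norm_eq_abs] at this
      rw [← integral_finset_sum _ hint]
      have hzero : ∀ y : K, ∑ i, (f i) y = 0 := by
        intro y
        have : (∑ i, f i) y = (0 : C(K, ℝ)) y := by rw [hf0]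
        simpa using this
      calc ∫ y, ∑ i, (f i) y ∂(μ.comap Subtype.val)
          = ∫ _ : K, (0 : ℝ) ∂(μ.comap Subtype.val) :=
            integral_congr_ae (ae_of_all _ hzero)
      _ = 0 := integral_zero _ _
    calc ∑ i, ∫ y, Sbar a b (l i) (⇑(f i)) y ∂((μs i).comap Subtype.val)
        = ∑ i, ((∫ y, Sbar a b (l i) (⇑(f i)) y ∂((μs i).comap Subtype.val))
            + (∫ y, (f i) y ∂(μ.comap Subtype.val))) := by
          rw [Finset.sum_add_distrib, hsum0, add_zero]
    _ ≤ ∑ i, l i * genWPow a b 2 μ (μs i) := Finset.sum_le_sum fun i _ => key i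
    _ = ∑ i, l i * genW a b 2 μ (μs i) ^ 2 := by
          refine Finset.sum_congr rfl fun i _ => ?_
          rw [hsq i]
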